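/- Every carefully synchronizing partial finite automaton with n states has a careful reset word of length at most 2^n − n − 1. -/
import Mathlib


/-- Apply a word to a state of a partial finite automaton: the result is `none` as soon
as an undefined transition is met. -/
def pApplyWord {Q A : Type*} (δ : Q → A → Option Q) (q : Q) : List A → Option Q
  | [] => some q
  | a :: w =>
      match δ q a with
      | none => none
      | some q' => pApplyWord δ q' w

/-- `w` is a careful reset word for the PFA `δ`: every letter of `w` is defined at every
state reached along the way (starting from any state), and `w` sends all states to one
common state `p`. -/
def IsCarefulReset {Q A : Type*} (δ : Q → A → Option Q) (w : List A) : Prop :=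
  ∃ p : Q, ∀ q : Q, pApplyWord δ q w = some p

lemma pApplyWord_append {Q A : Type*} (δ : Q → A → Option Q) (q : Q) (u v : List A) :
    pApplyWord δ q (u ++ v) = (pApplyWord δ q u).bind (fun r => pApplyWord δ r v) := by
  induction u generalizing q with
  | nil => simp [pApplyWord]
  | cons a u ih =>
      simp only [List.cons_append, pApplyWord]
      cases δ q a with
      | none => simp
      | some q' => simp [ih]

lemma card_two_le_subtype {Q : Type*} [Fintype Q] [DecidableEq Q] :
    Fintype.card {T : Finset Q // 2 ≤ T.card} =
      2 ^ Fintype.card Q - Fintype.card Q - 1 := by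
  classical
  have hb : Function.Bijective
      (fun o : Option Q => (⟨o.elim ∅ (fun q => {q}), by cases o <;> simp⟩ :
        {T : Finset Q // T.card ≤ 1})) := by
    constructor
    · intro o₁ o₂ h
      rw [Subtype.ext_iff] at h
      cases o₁ <;> cases o₂ <;> simp only [Option.elim] at h
      · rfl
      · exact absurd h.symm (Finset.singleton_ne_empty _)
      · exact absurd h (Finset.singleton_ne_empty _)
      · rw [Finset.singleton_injective h]
    · rintro ⟨T, hT⟩
      rcases Nat.le_one_iff_eq_zero_or_eq_one.mp hT with h | h
      · exact ⟨none, by simpa [Subtype.ext_iff] using (Finset.card_eq_zero.mp h).symm⟩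
      · obtain ⟨q, rfl⟩ := Finset.card_eq_one.mp h
        exact ⟨some q, rfl⟩
  have h1 : Fintype.card {T : Finset Q // T.card ≤ 1} = Fintype.card Q + 1 := by
    rw [← Fintype.card_of_bijective hb, Fintype.card_option]
  have h2 : Fintype.card {T : Finset Q // 2 ≤ T.card} =
      Fintype.card {T : Finset Q // ¬ T.card ≤ 1} := by
    apply Fintype.card_congr
    apply Equiv.subtypeEquivRight
    intro T; omega
  rw [h2, Fintype.card_subtype_compl, h1, Fintype.card_finset, Nat.sub_sub]

lemma careful_shorten {Q A : Type*} [Fintype Q] (δ : Q → A → Option Q)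
    (w : List A) (hw : IsCarefulReset δ w)
    (hl : 2 ^ Fintype.card Q - Fintype.card Q - 1 < w.length) :
    ∃ w' : List A, IsCarefulReset δ w' ∧ w'.length < w.length := by
  classical
  obtain ⟨p, hp⟩ := hw
  set ℓ := w.length with hℓ
  -- definedness along prefixes
  have hdef : ∀ (q : Q) (i : ℕ), ∃ r, pApplyWord δ q (w.take i) = some r := by
    intro q i
    have h1 := hp q
    rw [← List.take_append_drop i w, pApplyWord_append] at h1
    cases hx : pApplyWord δ q (w.take i) with
    | none => rw [hx] at h1; simp at h1
    | some r => exact ⟨r, rfl⟩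
  set S : ℕ → Finset Q :=
    fun i => Finset.univ.filter (fun r => ∃ q, pApplyWord δ q (w.take i) = some r) with hS
  have memS : ∀ (r : Q) (i : ℕ), r ∈ S i ↔ ∃ q, pApplyWord δ q (w.take i) = some r := by
    intro r i; simp [hS]
  by_contra hno
  push_neg at hno
  -- Case A: no proper prefix is already a reset word
  have hA : ∀ i, i < ℓ → ¬ ∃ r, S i = {r} := by
    rintro i hi ⟨r, hr⟩
    have hreset : IsCarefulReset δ (w.take i) := by
      refine ⟨r, fun q => ?_⟩
      obtain ⟨r', hr'⟩ := hdef q i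
      have : r' ∈ S i := (memS r' i).mpr ⟨q, hr'⟩
      rw [hr, Finset.mem_singleton] at this
      rw [hr', this]
    have := hno _ hreset
    rw [List.length_take] at this
    omega
  -- Case B: the prefix images are pairwise distinct
  have hB : ∀ i j, i < j → j ≤ ℓ → S i ≠ S j := by
    intro i j hij hjl hSij
    have hreset : IsCarefulReset δ (w.take i ++ w.drop j) := by
      refine ⟨p, fun q => ?_⟩
      rw [pApplyWord_append]
      obtain ⟨r, hr⟩ := hdef q i
      rw [hr, Option.bind_some]
      have hrS : r ∈ S j := by rw [← hSij]; exact (memS r i).mpr ⟨q, hr⟩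
      obtain ⟨q', hq'⟩ := (memS r j).mp hrS
      have h2 := hp q'
      rw [← List.take_append_drop j w, pApplyWord_append, hq', Option.bind_some] at h2
      exact h2
    have := hno _ hreset
    rw [List.length_append, List.length_take, List.length_drop] at this
    omega
  -- each intermediate image has at least 2 elements
  have hcard : ∀ i, i < ℓ → 2 ≤ (S i).card := by
    intro i hi
    obtain ⟨r, hr⟩ := hdef p i
    have hne : (S i).Nonempty := ⟨r, (memS r i).mpr ⟨p, hr⟩⟩
    by_contra hc
    push_neg at hc
    interval_cases h : (S i).card
    · exact absurd (Finset.card_eq_zero.mp h) hne.ne_empty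
    · exact hA i hi (Finset.card_eq_one.mp h)
  -- pigeonhole
  set F : Fin ℓ → {T : Finset Q // 2 ≤ T.card} :=
    fun i => ⟨S i, hcard i i.2⟩ with hF
  have hFinj : Function.Injective F := by
    intro i j hij
    have hSij : S i = S j := congrArg Subtype.val hij
    rcases lt_trichotomy (i : ℕ) (j : ℕ) with h | h | h
    · exact absurd hSij (hB i j h (le_of_lt j.2))
    · exact Fin.ext h
    · exact absurd hSij.symm (hB j i h (le_of_lt i.2))
  have := Fintype.card_le_of_injective F hFinj
  rw [Fintype.card_fin, card_two_le_subtype] at this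
  omega

/-- Every carefully synchronizing PFA with `n` states has a careful reset word of length
at most `2^n - n - 1`. -/
theorem careful_reset_word_length_bound {Q A : Type*} [Fintype Q]
    (δ : Q → A → Option Q) (h : ∃ w : List A, IsCarefulReset δ w) :
    ∃ w : List A, IsCarefulReset δ w ∧
      w.length ≤ 2 ^ Fintype.card Q - Fintype.card Q - 1 := by
  classical
  obtain ⟨w, hw⟩ := h
  have key : ∀ (k : ℕ) (w : List A), IsCarefulReset δ w → w.length ≤ k →
      ∃ w' : List A, IsCarefulReset δ w' ∧
        w'.length ≤ 2 ^ Fintype.card Q - Fintype.card Q - 1 := by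
    intro k
    induction k with
    | zero => intro w hw hlen; exact ⟨w, hw, by omega⟩
    | succ n ih =>
        intro w hw hlen
        by_cases h2 : w.length ≤ 2 ^ Fintype.card Q - Fintype.card Q - 1
        · exact ⟨w, hw, h2⟩
        · push_neg at h2
          obtain ⟨w', hw', hlt⟩ := careful_shorten δ w hw h2
          exact ih w' hw' (by omega)
  exact key w.length w hw le_rfl
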